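/- Let w be an aperiodic infinite word over a two-letter alphabet that is a fixed point of an m-uniform morphism σ (m ≥ 2). Then w is uniformly recurrent if and only if σ is primitive. -/

import Mathlib

/-- Extension of a substitution (given by its images of letters) to finite words. -/
def substWord {A : Type*} (σ : A → List A) (w : List A) : List A :=
  w.flatMap σ

/-- `substIter σ n a` is the word `σ^n(a)`. -/
def substIter {A : Type*} (σ : A → List A) (n : ℕ) (a : A) : List A :=
  (substWord σ)^[n] [a]

/-- `σ` is `m`-uniform: every letter has image of length `m`. -/
def IsUniform {A : Type*} (σ : A → List A) (m : ℕ) : Prop :=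
  ∀ a, (σ a).length = m

/-- `σ` is primitive: some power `σ^n` maps every letter to a word containing every letter. -/
def IsPrimitive {A : Type*} (σ : A → List A) : Prop :=
  ∃ n, 1 ≤ n ∧ ∀ a b, b ∈ substIter σ n a

/-- Application of an `m`-uniform substitution to an infinite word, letter by letter. -/
def substInf {A : Type*} [Inhabited A] (σ : A → List A) (m : ℕ) (x : ℕ → A) : ℕ → A :=
  fun n => (σ (x (n / m))).getD (n % m) default

/-- The factor `x[i .. i+len-1]` of an infinite word `x`. -/
def subword {A : Type*} (x : ℕ → A) (i len : ℕ) : List A :=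
  (List.range len).map fun j => x (i + j)

/-- `w` is a factor of the infinite word `x`. -/
def FactorOf {A : Type*} (w : List A) (x : ℕ → A) : Prop :=
  ∃ i, subword x i w.length = w

/-- An infinite word is eventually periodic. -/
def EventuallyPeriodic {A : Type*} (x : ℕ → A) : Prop :=
  ∃ p, 1 ≤ p ∧ ∃ N, ∀ n, N ≤ n → x (n + p) = x n

/-- An infinite word is aperiodic if it is not eventually periodic. -/
def IsAperiodic {A : Type*} (x : ℕ → A) : Prop :=
  ¬ EventuallyPeriodic x

/-- The shift orbit closure of an infinite word, in the product topology on `ℕ → A`. -/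
def shiftOrbitClosure {A : Type*} [TopologicalSpace A] (x : ℕ → A) : Set (ℕ → A) :=
  closure {y | ∃ n : ℕ, y = fun k => x (k + n)}

/-- `y` contains a `k`-anti-power with block length `d` starting at position `n`:
the `k` consecutive blocks of length `d` starting at `n` are pairwise distinct. -/
def HasAntipower {A : Type*} (y : ℕ → A) (n k d : ℕ) : Prop :=
  ∀ i < k, ∀ j < k, i ≠ j →
    subword y (n + i * d) d ≠ subword y (n + j * d) d

/-- An infinite word is uniformly recurrent: for every factor `u` there is a length `L` such that
every factor of length `L` contains `u`. -/
def UniformlyRecurrent {A : Type*} (x : ℕ → A) : Prop :=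
  ∀ u : List A, FactorOf u x →
    ∃ L : ℕ, ∀ v : List A, FactorOf v x → v.length = L → u <:+: v

/-!
The fixed point is a concatenation of the blocks `σⁿ(w i)`, each filling the positions
`[i mⁿ, (i + 1) mⁿ)`. If every letter occurs in `σᵖ(c)` for every `c`, a factor of `w` lies in
some prefix `σⁿ(w 0)`, which then occurs in every block `σ^(p + n)(c)`; every window of twice
the block length contains a whole block. Conversely, with `a = w 0`, the first letter of `σ(a)`
is `a`, and aperiodicity forces the other letter `b` into `σ(a)`. If `a ∈ σ(b)`, then `a` occurs
in both images and `σ(a)` contains both letters, so `σ²` is positive. Otherwise `σ(b) = bᵐ`: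
then `σ` is not primitive, and the blocks `σⁿ(b) = b^(mⁿ)` are arbitrarily long runs of `b` in
`w` avoiding the factor `a`.
-/

section Substitution

variable {A : Type*} (σ : A → List A)

theorem iterate_substWord (n : ℕ) (l : List A) :
    (substWord σ)^[n] l = l.flatMap (substIter σ n) := by
  induction n generalizing l with
  | zero => exact (List.flatMap_singleton' l).symm
  | succ n ih =>
    have hstep : ∀ c, substIter σ (n + 1) c = (σ c).flatMap (substIter σ n) := fun c => by
      rw [substIter, Function.iterate_succ_apply, ih]
      simp [substWord]
    rw [Function.iterate_succ_apply, ih, substWord, List.flatMap_assoc, funext hstep]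

theorem substIter_one (c : A) : substIter σ 1 c = σ c := by
  simp [substIter, substWord]

theorem substIter_add (k n : ℕ) (c : A) :
    substIter σ (k + n) c = (substIter σ k c).flatMap (substIter σ n) := by
  rw [substIter, add_comm, Function.iterate_add_apply, iterate_substWord, ← substIter]

theorem forall_mem_substIter_eq {b : A} (hb : ∀ x ∈ σ b, x = b) (n : ℕ) :
    ∀ x ∈ substIter σ n b, x = b := by
  induction n with
  | zero => simp [substIter]
  | succ n ih =>
    intro x hx
    rw [substIter_add, List.mem_flatMap] at hx
    obtain ⟨e, he, hx⟩ := hx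
    rw [ih e he, substIter_one] at hx
    exact hb x hx

theorem not_isPrimitive_of_forall_mem_eq {a b : A} (hab : a ≠ b) (hb : ∀ x ∈ σ b, x = b) :
    ¬ IsPrimitive σ := fun ⟨n, _, hn⟩ => hab (forall_mem_substIter_eq σ hb n a (hn b a))

theorem isPrimitive_of_forall_mem {e : A} (he : ∀ c, e ∈ σ c) (hσe : ∀ d, d ∈ σ e) :
    IsPrimitive σ := by
  refine ⟨2, by norm_num, fun c d => ?_⟩
  rw [substIter_add σ 1 1, List.mem_flatMap]
  exact ⟨e, by simpa [substIter_one] using he c, by simpa [substIter_one] using hσe d⟩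

end Substitution

section Subword

variable {A : Type*} (x : ℕ → A)

@[simp]
theorem length_subword (i len : ℕ) : (subword x i len).length = len := by
  simp [subword]

theorem mem_subword_iff {i len : ℕ} {a : A} :
    a ∈ subword x i len ↔ ∃ j < len, x (i + j) = a := by
  simp [subword]

theorem subword_add (i l₁ l₂ : ℕ) :
    subword x i (l₁ + l₂) = subword x i l₁ ++ subword x (i + l₁) l₂ := by
  simp [subword, List.range_add, add_assoc]

theorem subword_mul (i k M : ℕ) :
    subword x i (k * M) = (List.range k).flatMap fun s => subword x (i + s * M) M := by
  induction k with
  | zero => simp [subword]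
  | succ k ih => rw [add_mul, one_mul, subword_add, ih, List.range_succ, List.flatMap_append]; simp

theorem subword_infix_subword {i len j len' : ℕ} (h₁ : j ≤ i) (h₂ : i + len ≤ j + len') :
    subword x i len <:+: subword x j len' := by
  obtain ⟨d, rfl⟩ : ∃ d, len' = (i - j) + (len + d) := ⟨j + len' - i - len, by omega⟩
  refine ⟨subword x j (i - j), subword x (i + len) d, ?_⟩
  rw [subword_add, subword_add, show j + (i - j) = i by omega, List.append_assoc]

end Subword

section FixedPoint

variable {A : Type*} [Inhabited A] {σ : A → List A} {m : ℕ} {w : ℕ → A}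

theorem subword_mul_eq_of_fixed (hunif : IsUniform σ m) (hfix : substInf σ m w = w) (i : ℕ) :
    subword w (i * m) m = σ (w i) := by
  refine List.ext_getElem (by simp [hunif (w i)]) fun r hr hr' => ?_
  have hr : r < m := by simpa using hr
  have hdiv : (i * m + r) / m = i := by
    rw [Nat.add_comm, Nat.add_mul_div_right _ _ (by omega), Nat.div_eq_of_lt hr, zero_add]
  have hmod : (i * m + r) % m = r := by
    rw [Nat.add_comm, Nat.add_mul_mod_self_right, Nat.mod_eq_of_lt hr]
  calc (subword w (i * m) m)[r] = w (i * m + r) := by simp [subword]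
    _ = substInf σ m w (i * m + r) := by rw [hfix]
    _ = (σ (w i))[r] := by simp [substInf, hdiv, hmod, hr']

theorem subword_mul_pow_eq_of_fixed (hunif : IsUniform σ m) (hfix : substInf σ m w = w)
    (n i : ℕ) : subword w (i * m ^ n) (m ^ n) = substIter σ n (w i) := by
  induction n generalizing i with
  | zero => simp [subword, substIter]
  | succ n ih =>
    have hpos : ∀ s, i * m ^ (n + 1) + s * m ^ n = (i * m + s) * m ^ n := fun s => by ring
    rw [pow_succ', subword_mul, add_comm, substIter_add, substIter_one,
      ← subword_mul_eq_of_fixed hunif hfix]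
    simp only [← pow_succ', hpos, ih]
    simp [subword, List.flatMap_map]

theorem mem_substIter_of_fixed (hunif : IsUniform σ m) (hfix : substInf σ m w = w)
    {n r : ℕ} (i : ℕ) (hr : r < m ^ n) : w (i * m ^ n + r) ∈ substIter σ n (w i) := by
  rw [← subword_mul_pow_eq_of_fixed hunif hfix, mem_subword_iff]
  exact ⟨r, hr, rfl⟩

theorem exists_eq_of_mem_of_fixed (hunif : IsUniform σ m) (hfix : substInf σ m w = w)
    {i : ℕ} {b : A} (hb : b ∈ σ (w i)) : ∃ j, w j = b := by
  rw [← subword_mul_eq_of_fixed hunif hfix, mem_subword_iff] at hb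
  obtain ⟨j, -, hj⟩ := hb
  exact ⟨_, hj⟩

theorem apply_zero_mem_of_fixed (hm : 0 < m) (hunif : IsUniform σ m)
    (hfix : substInf σ m w = w) : w 0 ∈ σ (w 0) := by
  simpa [substIter_one] using mem_substIter_of_fixed hunif hfix (n := 1) 0 (by simpa using hm)

theorem uniformlyRecurrent_of_isPrimitive (hm : 2 ≤ m) (hunif : IsUniform σ m)
    (hfix : substInf σ m w = w) (hprim : IsPrimitive σ) : UniformlyRecurrent w := by
  obtain ⟨p, -, hp⟩ := hprim
  rintro u ⟨i₀, hu⟩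
  set n := i₀ + u.length
  have hprefix : u <:+: substIter σ n (w 0) := by
    have hn : n < m ^ n := Nat.lt_pow_self (by omega)
    rw [← hu, ← subword_mul_pow_eq_of_fixed hunif hfix, zero_mul]
    exact subword_infix_subword w (Nat.zero_le _) (by omega)
  set M := m ^ (p + n)
  have hblock : ∀ q, u <:+: subword w (q * M) M := fun q => by
    rw [subword_mul_pow_eq_of_fixed hunif hfix, substIter_add]
    exact hprefix.trans (List.infix_flatMap_of_mem (hp (w q) (w 0)) _)
  refine ⟨2 * M, fun v ⟨j, hv⟩ hvlen => ?_⟩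
  -- the window `[j, j + 2M)` contains the block starting at the next multiple of `M`
  have hbelow := Nat.div_mul_le_self j M
  have habove := Nat.lt_div_mul_add (a := j) (show 0 < M by positivity)
  rw [← hv, hvlen]
  refine (hblock (j / M + 1)).trans (subword_infix_subword w ?_ ?_) <;> rw [add_one_mul] <;> omega

theorem not_uniformlyRecurrent_of_forall_mem_eq (hm : 2 ≤ m) (hunif : IsUniform σ m)
    (hfix : substInf σ m w = w) {a b : A} (hab : a ≠ b) (ha : ∃ i, w i = a)
    (hb : ∃ i, w i = b) (hσb : ∀ x ∈ σ b, x = b) : ¬ UniformlyRecurrent w := by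
  intro hUR
  obtain ⟨i, rfl⟩ := ha
  obtain ⟨k, rfl⟩ := hb
  obtain ⟨L, hL⟩ := hUR [w i] ⟨i, rfl⟩
  have hwindow : [w i] <:+: subword w (k * m ^ L) L := hL _ ⟨k * m ^ L, by simp⟩ (by simp)
  obtain ⟨j, hj, hwj⟩ := (mem_subword_iff w).1 (hwindow.subset (List.mem_singleton_self _))
  have hrun := forall_mem_substIter_eq σ hσb L _
    (mem_substIter_of_fixed hunif hfix k (hj.trans (Nat.lt_pow_self (by omega))))
  exact hab (hwj ▸ hrun)

theorem exists_mem_ne_of_isAperiodic (hm : 2 ≤ m) (hunif : IsUniform σ m)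
    (hfix : substInf σ m w = w) (haper : IsAperiodic w) : ∃ b ∈ σ (w 0), b ≠ w 0 := by
  by_contra! hconst
  have hw : ∀ r, w r = w 0 := fun r => by
    simpa using forall_mem_substIter_eq σ hconst r _
      (mem_substIter_of_fixed hunif hfix (r := r) 0 (Nat.lt_pow_self (by omega)))
  exact haper ⟨1, le_rfl, 0, fun n _ => by rw [hw, hw n]⟩

end FixedPoint

/-- Remark 3: an aperiodic binary fixed point `w` of an `m`-uniform morphism `σ`
(`m ≥ 2`) is uniformly recurrent if and only if `σ` is primitive. -/
theorem uniformlyRecurrent_iff_primitive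
    (σ : Fin 2 → List (Fin 2)) (m : ℕ) (hm : 2 ≤ m) (hunif : IsUniform σ m)
    (w : ℕ → Fin 2) (hfix : substInf σ m w = w) (haper : IsAperiodic w) :
    UniformlyRecurrent w ↔ IsPrimitive σ := by
  obtain ⟨b, hb, hba⟩ := exists_mem_ne_of_isAperiodic hm hunif hfix haper
  have hletters : ∀ x : Fin 2, x = w 0 ∨ x = b := fun x => by omega
  have hself := apply_zero_mem_of_fixed (by omega) hunif hfix
  by_cases hab : w 0 ∈ σ b
  · have hprim : IsPrimitive σ := isPrimitive_of_forall_mem σ (e := w 0)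
      (fun c => by rcases hletters c with rfl | rfl <;> assumption)
      (fun d => by rcases hletters d with rfl | rfl <;> assumption)
    exact iff_of_true (uniformlyRecurrent_of_isPrimitive hm hunif hfix hprim) hprim
  · have hσb : ∀ x ∈ σ b, x = b := fun x hx =>
      (hletters x).resolve_left fun h => hab (h ▸ hx)
    exact iff_of_false
      (not_uniformlyRecurrent_of_forall_mem_eq hm hunif hfix hba.symm ⟨0, rfl⟩
        (exists_eq_of_mem_of_fixed hunif hfix hb) hσb)
      (not_isPrimitive_of_forall_mem_eq σ hba.symm hσb)
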